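/- arXiv:2501.03914 — 9 statements merged into one kernel-verified Lean document; each statement's English description precedes it below -/
import Mathlib

section
/- Every series-parallel pomset is N-free: it contains no subpomset isomorphic to the poset on four elements {x1, x2, x3, x4} with relations x1 < x2, x3 < x2, x3 < x4 and no other relations. -/
/-!
N-freeness is invariant under isomorphism and trivial for pomsets with at most one element.
An N cannot straddle a parallel composition: elements on different sides are incomparable,
while the comparability graph x₁ – x₂ – x₃ – x₄ of N is connected. Nor can it straddle a
sequential composition: elements on different sides are comparable, while the
incomparability graph x₃ – x₁ – x₄ – x₂ of N is connected as well.
-/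

/-- A finite labelled strict poset with carrier type `α`. A pomset is an
isomorphism class of such structures. -/
structure LPoset (σ : Type) where
  α : Type
  fin : Finite α
  lt : α → α → Prop
  lt_irrefl : ∀ x, ¬ lt x x
  lt_trans : ∀ x y z, lt x y → lt y z → lt x z
  label : α → σ

/-- Isomorphism of labelled posets: a bijection preserving order (both ways)
and labels. Equality of pomsets is isomorphism of representatives. -/
def LPoset.Iso {σ : Type} (A B : LPoset σ) : Prop :=
  ∃ f : A.α ≃ B.α, (∀ x y, A.lt x y ↔ B.lt (f x) (f y)) ∧ ∀ x, B.label (f x) = A.label x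

/-- Parallel composition: disjoint union, no cross ordering. -/
def LPoset.par {σ : Type} (A B : LPoset σ) : LPoset σ where
  α := A.α ⊕ B.α
  fin := by have := A.fin; have := B.fin; infer_instance
  lt := fun x y =>
    match x, y with
    | .inl a, .inl b => A.lt a b
    | .inr a, .inr b => B.lt a b
    | _, _ => False
  lt_irrefl := by
    rintro (a | a) h
    · exact A.lt_irrefl a h
    · exact B.lt_irrefl a h
  lt_trans := by
    rintro (a | a) (b | b) (c | c) h1 h2 <;> simp_all
    · exact A.lt_trans _ _ _ h1 h2
    · exact B.lt_trans _ _ _ h1 h2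
  label := Sum.elim A.label B.label

/-- Sequential composition: disjoint union, everything in `A` below everything in `B`. -/
def LPoset.seq {σ : Type} (A B : LPoset σ) : LPoset σ where
  α := A.α ⊕ B.α
  fin := by have := A.fin; have := B.fin; infer_instance
  lt := fun x y =>
    match x, y with
    | .inl a, .inl b => A.lt a b
    | .inr a, .inr b => B.lt a b
    | .inl _, .inr _ => True
    | .inr _, .inl _ => False
  lt_irrefl := by
    rintro (a | a) h
    · exact A.lt_irrefl a h
    · exact B.lt_irrefl a h
  lt_trans := by
    rintro (a | a) (b | b) (c | c) h1 h2 <;> simp_all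
    · exact A.lt_trans _ _ _ h1 h2
    · exact B.lt_trans _ _ _ h1 h2
  label := Sum.elim A.label B.label

/-- The set SP of series-parallel pomsets: the smallest set of pomsets
(i.e. closed under isomorphism) containing the empty pomset and the
singleton pomsets, closed under sequential and parallel composition. -/
inductive IsSP {σ : Type} : LPoset σ → Prop
  | empty (A : LPoset σ) (h : IsEmpty A.α) : IsSP A
  | single (A : LPoset σ) (h1 : Nonempty A.α) (h2 : Subsingleton A.α) : IsSP A
  | seq {A B : LPoset σ} : IsSP A → IsSP B → IsSP (A.seq B)
  | par {A B : LPoset σ} : IsSP A → IsSP B → IsSP (A.par B)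
  | iso {A B : LPoset σ} : IsSP A → LPoset.Iso A B → IsSP B

/-- `B` is a subpomset of `A`: an injection of carriers preserving
labelling and preserving the order in both directions. -/
def LPoset.Subpomset {σ : Type} (B A : LPoset σ) : Prop :=
  ∃ f : B.α → A.α, Function.Injective f ∧
    (∀ x y, B.lt x y ↔ A.lt (f x) (f y)) ∧ ∀ x, A.label (f x) = B.label x

/-- The N pattern: four elements x1, x2, x3, x4 with x1 < x2, x3 < x2, x3 < x4
and no other relations, with labelling ℓ. -/
def NPoset {σ : Type} (ℓ : Fin 4 → σ) : LPoset σ where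
  α := Fin 4
  fin := inferInstance
  lt := fun x y => (x = 0 ∧ y = 1) ∨ (x = 2 ∧ y = 1) ∨ (x = 2 ∧ y = 3)
  lt_irrefl := by decide
  lt_trans := by decide
  label := ℓ

/-- A pomset is N-free if no N pattern (for any labelling) embeds into it. -/
def NFree {σ : Type} (A : LPoset σ) : Prop :=
  ¬ ∃ ℓ : Fin 4 → σ, (NPoset ℓ).Subpomset A

namespace LPoset

variable {σ : Type}

structure IsEmbedding (B A : LPoset σ) (f : B.α → A.α) : Prop where
  injective : Function.Injective f
  lt_iff_lt : ∀ x y, B.lt x y ↔ A.lt (f x) (f y)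
  label_apply : ∀ x, A.label (f x) = B.label x

theorem subpomset_iff {B A : LPoset σ} : B.Subpomset A ↔ ∃ f, IsEmbedding B A f :=
  ⟨fun ⟨f, h₁, h₂, h₃⟩ => ⟨f, h₁, h₂, h₃⟩, fun ⟨f, h₁, h₂, h₃⟩ => ⟨f, h₁, h₂, h₃⟩⟩

theorem IsEmbedding.comp {C B A : LPoset σ} {g : B.α → A.α} {f : C.α → B.α}
    (hg : IsEmbedding B A g) (hf : IsEmbedding C B f) : IsEmbedding C A (g ∘ f) where
  injective := hg.injective.comp hf.injective
  lt_iff_lt x y := (hf.lt_iff_lt x y).trans (hg.lt_iff_lt _ _)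
  label_apply x := (hg.label_apply _).trans (hf.label_apply x)

theorem Subpomset.trans {C B A : LPoset σ} (hCB : C.Subpomset B) (hBA : B.Subpomset A) :
    C.Subpomset A := by
  obtain ⟨f, hf⟩ := subpomset_iff.1 hCB
  obtain ⟨g, hg⟩ := subpomset_iff.1 hBA
  exact subpomset_iff.2 ⟨g ∘ f, hg.comp hf⟩

theorem Iso.subpomset_symm {A B : LPoset σ} (h : A.Iso B) : B.Subpomset A := by
  obtain ⟨e, hlt, hlabel⟩ := h
  refine ⟨e.symm, e.symm.injective, fun x y => ?_, fun x => ?_⟩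
  · rw [hlt, e.apply_symm_apply, e.apply_symm_apply]
  · rw [← hlabel, e.apply_symm_apply]

theorem IsEmbedding.subpomset_of_forall_mem_range {B A D : LPoset σ} {i : A.α → D.α}
    {f : B.α → D.α} (hi : IsEmbedding A D i) (hf : IsEmbedding B D f)
    (hrange : ∀ x, f x ∈ Set.range i) : B.Subpomset A := by
  choose g hg using hrange
  refine ⟨g, fun x y hxy => hf.injective ?_, fun x y => ?_, fun x => ?_⟩
  · rw [← hg x, ← hg y, hxy]
  · rw [hf.lt_iff_lt, ← hg x, ← hg y, hi.lt_iff_lt]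
  · rw [← hi.label_apply, hg, hf.label_apply]

theorem isEmbedding_inl_seq (A C : LPoset σ) : IsEmbedding A (A.seq C) Sum.inl :=
  ⟨Sum.inl_injective, fun _ _ => Iff.rfl, fun _ => rfl⟩

theorem isEmbedding_inr_seq (A C : LPoset σ) : IsEmbedding C (A.seq C) Sum.inr :=
  ⟨Sum.inr_injective, fun _ _ => Iff.rfl, fun _ => rfl⟩

theorem isEmbedding_inl_par (A C : LPoset σ) : IsEmbedding A (A.par C) Sum.inl :=
  ⟨Sum.inl_injective, fun _ _ => Iff.rfl, fun _ => rfl⟩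

theorem isEmbedding_inr_par (A C : LPoset σ) : IsEmbedding C (A.par C) Sum.inr :=
  ⟨Sum.inr_injective, fun _ _ => Iff.rfl, fun _ => rfl⟩

theorem isLeft_eq_of_par_lt {A C : LPoset σ} {u v : A.α ⊕ C.α} (h : (A.par C).lt u v) :
    u.isLeft = v.isLeft := by
  rcases u with u | u <;> rcases v with v | v <;> first | rfl | exact h.elim

theorem isLeft_eq_of_seq_not_lt {A C : LPoset σ} {u v : A.α ⊕ C.α}
    (huv : ¬ (A.seq C).lt u v) (hvu : ¬ (A.seq C).lt v u) : u.isLeft = v.isLeft := by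
  rcases u with u | u <;> rcases v with v | v <;> first | rfl | exact (huv trivial).elim |
    exact (hvu trivial).elim

end LPoset

theorem Sum.forall_mem_range_inl_or_forall_mem_range_inr {ι α β : Type*} {f : ι → α ⊕ β}
    {x₀ : ι} (h : ∀ x, (f x).isLeft = (f x₀).isLeft) :
    (∀ x, f x ∈ Set.range Sum.inl) ∨ ∀ x, f x ∈ Set.range Sum.inr := by
  simp only [Set.range_inl, Set.range_inr, Set.mem_ofPred_eq, ← Sum.isLeft_eq_false, h]
  cases (f x₀).isLeft <;> simp

open LPoset

namespace NFree

variable {σ : Type}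

theorem of_subsingleton {A : LPoset σ} [Subsingleton A.α] : NFree A := by
  rintro ⟨ℓ, f, hf, -⟩
  exact (by decide : (0 : Fin 4) ≠ 1) (hf (Subsingleton.elim _ _))

theorem of_iso {A B : LPoset σ} (hA : NFree A) (h : A.Iso B) : NFree B :=
  fun ⟨ℓ, hB⟩ => hA ⟨ℓ, hB.trans h.subpomset_symm⟩

theorem seq {A C : LPoset σ} (hA : NFree A) (hC : NFree C) : NFree (A.seq C) := by
  rintro ⟨ℓ, hN⟩
  obtain ⟨f, hf⟩ : ∃ f : Fin 4 → A.α ⊕ C.α, IsEmbedding (NPoset ℓ) (A.seq C) f :=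
    subpomset_iff.1 hN
  have incomparable (x y : Fin 4) (hxy : ¬ (NPoset ℓ).lt x y) (hyx : ¬ (NPoset ℓ).lt y x) :
      (f x).isLeft = (f y).isLeft :=
    isLeft_eq_of_seq_not_lt (mt (hf.lt_iff_lt x y).2 hxy) (mt (hf.lt_iff_lt y x).2 hyx)
  have h₂₀ := incomparable 2 0 (by simp [NPoset]) (by simp [NPoset])
  have h₀₃ := incomparable 0 3 (by simp [NPoset]) (by simp [NPoset])
  have h₃₁ := incomparable 3 1 (by simp [NPoset]) (by simp [NPoset])
  have hside : ∀ x, (f x).isLeft = (f 0).isLeft := by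
    intro x; fin_cases x
    exacts [rfl, h₃₁.symm.trans h₀₃.symm, h₂₀, h₀₃.symm]
  rcases Sum.forall_mem_range_inl_or_forall_mem_range_inr hside with hl | hr
  · exact hA ⟨ℓ, (isEmbedding_inl_seq A C).subpomset_of_forall_mem_range hf hl⟩
  · exact hC ⟨ℓ, (isEmbedding_inr_seq A C).subpomset_of_forall_mem_range hf hr⟩

theorem par {A C : LPoset σ} (hA : NFree A) (hC : NFree C) : NFree (A.par C) := by
  rintro ⟨ℓ, hN⟩
  obtain ⟨f, hf⟩ : ∃ f : Fin 4 → A.α ⊕ C.α, IsEmbedding (NPoset ℓ) (A.par C) f :=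
    subpomset_iff.1 hN
  have comparable (x y : Fin 4) (hxy : (NPoset ℓ).lt x y) : (f x).isLeft = (f y).isLeft :=
    isLeft_eq_of_par_lt ((hf.lt_iff_lt x y).1 hxy)
  have h₀₁ := comparable 0 1 (by simp [NPoset])
  have h₂₁ := comparable 2 1 (by simp [NPoset])
  have h₂₃ := comparable 2 3 (by simp [NPoset])
  have hside : ∀ x, (f x).isLeft = (f 1).isLeft := by
    intro x; fin_cases x
    exacts [h₀₁, rfl, h₂₁, h₂₃.symm.trans h₂₁]
  rcases Sum.forall_mem_range_inl_or_forall_mem_range_inr hside with hl | hr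
  · exact hA ⟨ℓ, (isEmbedding_inl_par A C).subpomset_of_forall_mem_range hf hl⟩
  · exact hC ⟨ℓ, (isEmbedding_inr_par A C).subpomset_of_forall_mem_range hf hr⟩

end NFree

/-- Every series-parallel pomset is N-free. -/
theorem sp_is_nfree {σ : Type} (A : LPoset σ) (h : IsSP A) : NFree A := by
  induction h with
  | empty _ _ => exact .of_subsingleton
  | single _ _ _ => exact .of_subsingleton
  | seq _ _ hA hC => exact hA.seq hC
  | par _ _ hA hC => exact hA.par hC
  | iso _ e hA => exact hA.of_iso e
end

section
/- Every N-free pomset (over a nonempty alphabet) is series-parallel. -/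
namespace SPAux

variable {V : Type}

def co (G : V → V → Prop) : V → V → Prop := fun x y => x ≠ y ∧ ¬ G x y

def Conn (G : V → V → Prop) : Prop := ∀ x y, Relation.ReflTransGen G x y

def IsP4 (G : V → V → Prop) (a b c d : V) : Prop :=
  a ≠ b ∧ a ≠ c ∧ a ≠ d ∧ b ≠ c ∧ b ≠ d ∧ c ≠ d ∧
  G a b ∧ G b c ∧ G c d ∧ ¬ G a c ∧ ¬ G a d ∧ ¬ G b d

def HasP4 (G : V → V → Prop) : Prop := ∃ a b c d, IsP4 G a b c d

lemma rtg_symm {G : V → V → Prop} (hs : ∀ x y, G x y → G y x) {x y : V}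
    (h : Relation.ReflTransGen G x y) : Relation.ReflTransGen G y x := by
  induction h with
  | refl => exact .refl
  | tail _ e ih => exact (Relation.ReflTransGen.single (hs _ _ e)).trans ih

lemma rtg_edgeless {G : V → V → Prop} (h : ∀ x y, ¬ G x y) {x y : V}
    (hr : Relation.ReflTransGen G x y) : x = y := by
  induction hr with
  | refl => rfl
  | tail _ e _ => exact absurd e (h _ _)

lemma hasP4_co {G : V → V → Prop} (hs : ∀ x y, G x y → G y x)
    (h : HasP4 (co G)) : HasP4 G := by
  obtain ⟨a, b, c, d, hab, hac, had, hbc, hbd, hcd, e1, e2, e3, n1, n2, n3⟩ := h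
  have gac : G a c := by by_contra h; exact n1 ⟨hac, h⟩
  have gad : G a d := by by_contra h; exact n2 ⟨had, h⟩
  have gbd : G b d := by by_contra h; exact n3 ⟨hbd, h⟩
  exact ⟨c, a, d, b, hac.symm, hcd, hbc.symm, had, hab, hbd.symm,
    hs _ _ gac, gad, hs _ _ gbd, fun h => e3.2 h, fun h => e2.2 (hs _ _ h), fun h => e1.2 h⟩

variable {G : V → V → Prop} {v : V}

/-- restriction of `G` to the complement of `v`. -/
abbrev res (G : V → V → Prop) (v : V) : {x : V // x ≠ v} → {x : V // x ≠ v} → Prop :=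
  fun a b => G a.val b.val

lemma closed_rtg {C : Set {x : V // x ≠ v}}
    (hC : ∀ a ∈ C, ∀ b, G a.val b.val → b ∈ C) {x y : {x : V // x ≠ v}}
    (hx : x ∈ C) (h : Relation.ReflTransGen (res G v) x y) : y ∈ C := by
  induction h with
  | refl => exact hx
  | tail _ e ih => exact hC _ ih _ e

lemma escape {C : Set {x : V // x ≠ v}}
    (hC : ∀ a ∈ C, ∀ b, G a.val b.val → b ∈ C)
    {a : {x : V // x ≠ v}} (ha : a ∈ C) {z : V}
    (h : Relation.ReflTransGen G a.val z) :
    (∃ u ∈ C, G u.val v) ∨ ∃ hz : z ≠ v, (⟨z, hz⟩ : {x : V // x ≠ v}) ∈ C := by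
  induction h with
  | refl => exact .inr ⟨a.2, by simpa using ha⟩
  | @tail p q hp e ih =>
    rcases ih with h1 | ⟨hz, hzC⟩
    · exact .inl h1
    · by_cases hq : q = v
      · subst hq; exact .inl ⟨⟨p, hz⟩, hzC, e⟩
      · exact .inr ⟨hq, hC ⟨p, hz⟩ hzC ⟨q, hq⟩ e⟩

lemma escape' {C : Set {x : V // x ≠ v}}
    (hC : ∀ a ∈ C, ∀ b, G a.val b.val → b ∈ C)
    {a : {x : V // x ≠ v}} (ha : a ∈ C)
    (h : Relation.ReflTransGen G a.val v) : ∃ u ∈ C, G u.val v := by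
  rcases escape hC ha h with h1 | ⟨hz, _⟩
  · exact h1
  · exact absurd rfl hz

lemma pairlem {u1 w : {x : V // x ≠ v}}
    (h : Relation.ReflTransGen (res G v) u1 w)
    (h1 : G u1.val v) (h2 : ¬ G w.val v) :
    ∃ u u' : {x : V // x ≠ v}, G u.val u'.val ∧ G u.val v ∧ ¬ G u'.val v ∧
      Relation.ReflTransGen (res G v) u1 u ∧ Relation.ReflTransGen (res G v) u1 u' := by
  induction h with
  | refl => exact absurd h1 h2
  | @tail z w hz e ih =>
    by_cases hgz : G z.val v
    · exact ⟨z, w, e, hgz, h2, hz, hz.tail e⟩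
    · obtain ⟨u, u', p1, p2, p3, p4, p5⟩ := ih hgz
      exact ⟨u, u', p1, p2, p3, p4, p5⟩

lemma core (hs : ∀ x y, G x y → G y x) (hi : ∀ x, ¬ G x x)
    (hconn : Conn G) (hco : Conn (co G)) (v : V)
    (hdis : ∃ a b : {x : V // x ≠ v}, ¬ Relation.ReflTransGen (res G v) a b) :
    HasP4 G := by
  obtain ⟨a, b, hab⟩ := hdis
  -- a nonneighbor w of v
  have hw : ∃ w : {x : V // x ≠ v}, ¬ G v w.val := by
    by_contra h
    push_neg at h
    rcases (hco v a.val).cases_head with h1 | ⟨c, hc, _⟩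
    · exact a.2 h1.symm
    · exact hc.2 (h ⟨c, fun hh => hc.1 hh.symm⟩)
  obtain ⟨w, hwv⟩ := hw
  set C : Set {x : V // x ≠ v} := {x | Relation.ReflTransGen (res G v) w x} with hCdef
  have hCclosed : ∀ x ∈ C, ∀ y, G x.val y.val → y ∈ C := fun x hx y e =>
    Relation.ReflTransGen.tail hx e
  have hwC : w ∈ C := Relation.ReflTransGen.refl
  -- one of a, b is outside C
  have hb' : ∃ b' : {x : V // x ≠ v}, b' ∉ C := by
    by_contra h
    push_neg at h
    exact hab ((rtg_symm (fun x y e => hs _ _ e) (h a)).trans (h b))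
  obtain ⟨b', hb'C⟩ := hb'
  -- neighbor u1 of v inside C
  obtain ⟨u1, hu1C, hu1v⟩ := escape' hCclosed hwC (hconn w.val v)
  -- neighbor u2 of v outside C
  set C2 : Set {x : V // x ≠ v} := {x | Relation.ReflTransGen (res G v) b' x} with hC2def
  have hC2closed : ∀ x ∈ C2, ∀ y, G x.val y.val → y ∈ C2 := fun x hx y e =>
    Relation.ReflTransGen.tail hx e
  obtain ⟨u2, hu2C2, hu2v⟩ := escape' hC2closed (Relation.ReflTransGen.refl) (hconn b'.val v)
  have hu2C : u2 ∉ C := by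
    intro h
    exact hb'C (closed_rtg hCclosed h (rtg_symm (fun x y e => hs _ _ e) hu2C2))
  -- consecutive pair
  obtain ⟨u, u', euu', euv, hu'v, hpu, hpu'⟩ :=
    pairlem (rtg_symm (fun (x y : {x : V // x ≠ v}) (e : res G v x y) => hs _ _ e) hu1C)
      hu1v (fun h => hwv (hs _ _ h))
  have huC : u ∈ C := closed_rtg hCclosed hu1C hpu
  have hu'C : u' ∈ C := closed_rtg hCclosed hu1C hpu'
  have hne : ∀ {x y : {x : V // x ≠ v}}, x ∈ C → y ∉ C → x.val ≠ y.val := by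
    intro x y hx hy hxy
    exact hy (by rwa [Subtype.ext hxy] at hx)
  refine ⟨u'.val, u.val, v, u2.val, ?_, u'.2, hne hu'C hu2C, ?_, hne huC hu2C,
    fun h => u2.2 h.symm, hs _ _ euu', euv, hs _ _ hu2v, hu'v,
    ?_, ?_⟩
  · intro h; exact hi _ (by rw [Subtype.ext h] at euu'; exact euu')
  · exact u.2
  · intro h; exact hu2C (hCclosed _ hu'C _ h)
  · intro h; exact hu2C (hCclosed _ huC _ h)

end SPAux

namespace SPAux

variable {V : Type}

lemma hasP4_res {G : V → V → Prop} {v : V} (h : HasP4 (res G v)) : HasP4 G := by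
  obtain ⟨a, b, c, d, h1, h2, h3, h4, h5, h6, e1, e2, e3, n1, n2, n3⟩ := h
  exact ⟨a.val, b.val, c.val, d.val, fun h => h1 (Subtype.ext h), fun h => h2 (Subtype.ext h),
    fun h => h3 (Subtype.ext h), fun h => h4 (Subtype.ext h), fun h => h5 (Subtype.ext h),
    fun h => h6 (Subtype.ext h), e1, e2, e3, n1, n2, n3⟩

lemma seinsche : ∀ (n : ℕ) (V : Type) (_ : Finite V) (G : V → V → Prop),
    (∀ x y, G x y → G y x) → (∀ x, ¬ G x x) → Nat.card V ≤ n → 2 ≤ Nat.card V →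
    Conn G → Conn (co G) → HasP4 G := by
  classical
  intro n
  induction n with
  | zero => intro V _ G _ _ hle h2 _ _; omega
  | succ n ih =>
    intro V hfin G hs hi hle h2 hconn hco
    have hne : Nonempty V := by
      by_contra h
      rw [not_nonempty_iff] at h
      have : Nat.card V = 0 := Nat.card_eq_zero.mpr (Or.inl h)
      omega
    obtain ⟨v⟩ := hne
    have huniq : Unique {x : V // x = v} := ⟨⟨⟨v, rfl⟩⟩, by rintro ⟨x, rfl⟩; rfl⟩
    have hcardeq : Nat.card V = Nat.card {x : V // x ≠ v} + 1 := by
      have e := (Equiv.sumCompl (fun x : V => x = v)).symm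
      haveI := huniq
      rw [Nat.card_congr e, Nat.card_sum, Nat.card_unique]
      exact Nat.add_comm 1 _
    rcases Nat.lt_or_ge (Nat.card {x : V // x ≠ v}) 2 with hsml | hbig
    · -- card V = 2
      have hone : Nat.card {x : V // x ≠ v} = 1 := by omega
      obtain ⟨hss, hnn⟩ := Nat.card_eq_one_iff_unique.mp hone
      obtain ⟨w⟩ := hnn
      have hall : ∀ x : V, x = v ∨ x = w.val := by
        intro x
        by_cases h : x = v
        · exact .inl h
        · exact .inr (congrArg Subtype.val (Subsingleton.elim (⟨x, h⟩ : {x : V // x ≠ v}) w))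
      by_cases hvw : G v w.val
      · have hel : ∀ x y, ¬ co G x y := by
          rintro x y ⟨hxy, hng⟩
          rcases hall x with rfl | hx <;> rcases hall y with rfl | hy
          · exact hxy rfl
          · subst hy; exact hng hvw
          · subst hx; exact hng (hs _ _ hvw)
          · exact hxy (hx.trans hy.symm)
        exact absurd (rtg_edgeless hel (hco v w.val)).symm w.2
      · have hel : ∀ x y, ¬ G x y := by
          intro x y hng
          rcases hall x with rfl | hx <;> rcases hall y with rfl | hy
          · exact hi _ hng
          · subst hy; exact hvw hng
          · subst hx; exact hvw (hs _ _ hng)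
          · subst hx; subst hy; exact hi _ hng
        exact absurd (rtg_edgeless hel (hconn v w.val)).symm w.2
    · by_cases hc1 : Conn (res G v)
      · by_cases hc2 : Conn (co (res G v))
        · exact hasP4_res (ih _ inferInstance (res G v) (fun a b e => hs _ _ e)
            (fun a e => hi _ e) (by omega) hbig hc1 hc2)
        · refine hasP4_co hs (core (G := co G)
            (fun x y h => ⟨h.1.symm, fun e => h.2 (hs _ _ e)⟩)
            (fun x h => h.1 rfl) hco ?_ v ?_)
          · intro x y
            exact Relation.ReflTransGen.mono (fun a b (e : G a b) => (
              ⟨fun h => hi a (by rwa [← h] at e), fun h => h.2 e⟩ : co (co G) a b)) _ _ (hconn x y)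
          · unfold Conn at hc2
            push_neg at hc2
            obtain ⟨a, b, h⟩ := hc2
            exact ⟨a, b, fun hr => h (Relation.ReflTransGen.mono (fun p q (hpq : res (co G) v p q) => (
              ⟨fun he => hpq.1 (congrArg Subtype.val he), hpq.2⟩ : co (res G v) p q)) _ _ hr)⟩
      · unfold Conn at hc1
        push_neg at hc1
        obtain ⟨a, b, h⟩ := hc1
        exact core hs hi hconn hco v ⟨a, b, h⟩

end SPAux



namespace SPAux

variable {σ : Type}

def comp (A : LPoset σ) : A.α → A.α → Prop := fun x y => A.lt x y ∨ A.lt y x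

lemma comp_symm (A : LPoset σ) : ∀ x y, comp A x y → comp A y x := fun _ _ => Or.symm

lemma comp_irrefl (A : LPoset σ) : ∀ x, ¬ comp A x x := fun x h =>
  h.elim (A.lt_irrefl x) (A.lt_irrefl x)

lemma embedN (A : LPoset σ) (p q r s : A.α)
    (hpq : p ≠ q) (hpr : p ≠ r) (hps : p ≠ s) (hqr : q ≠ r) (hqs : q ≠ s) (hrs : r ≠ s)
    (l1 : A.lt p q) (l2 : A.lt r q) (l3 : A.lt r s)
    (m1 : ¬ A.lt p r) (m2 : ¬ A.lt r p) (m3 : ¬ A.lt p s) (m4 : ¬ A.lt s p)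
    (m5 : ¬ A.lt q s) (m6 : ¬ A.lt s q) :
    ∃ ℓ : Fin 4 → σ, (NPoset ℓ).Subpomset A := by
  have nqp : ¬ A.lt q p := fun h => A.lt_irrefl p (A.lt_trans _ _ _ l1 h)
  have nqr : ¬ A.lt q r := fun h => A.lt_irrefl q (A.lt_trans _ _ _ h l2)
  have nsr : ¬ A.lt s r := fun h => A.lt_irrefl r (A.lt_trans _ _ _ l3 h)
  have npp : ¬ A.lt p p := A.lt_irrefl p
  have nqq : ¬ A.lt q q := A.lt_irrefl q
  have nrr : ¬ A.lt r r := A.lt_irrefl r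
  have nss : ¬ A.lt s s := A.lt_irrefl s
  refine ⟨fun i => A.label (![p, q, r, s] i), ![p, q, r, s], ?_, ?_, fun x => rfl⟩
  · show Function.Injective (![p, q, r, s] : Fin 4 → A.α)
    intro x y h
    fin_cases x <;> fin_cases y <;> first | rfl | (exfalso; simp_all)
  · show ∀ x y : Fin 4, (NPoset (fun i => A.label (![p, q, r, s] i))).lt x y ↔
      A.lt (![p, q, r, s] x) (![p, q, r, s] y)
    intro x y
    fin_cases x <;> fin_cases y <;>
      simp_all [NPoset, Fin.isValue, Matrix.cons_val_zero, Matrix.cons_val_one,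
        Matrix.head_cons, Matrix.cons_val_two, Matrix.tail_cons, Matrix.cons_val_three,
        Matrix.head_fin_const]

lemma p4_to_N (A : LPoset σ) (h : HasP4 (comp A)) : ∃ ℓ : Fin 4 → σ, (NPoset ℓ).Subpomset A := by
  obtain ⟨a, b, c, d, hab, hac, had, hbc, hbd, hcd, e1, e2, e3, n1, n2, n3⟩ := h
  have n1a : ¬ A.lt a c := fun h => n1 (.inl h)
  have n1b : ¬ A.lt c a := fun h => n1 (.inr h)
  have n2a : ¬ A.lt a d := fun h => n2 (.inl h)
  have n2b : ¬ A.lt d a := fun h => n2 (.inr h)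
  have n3a : ¬ A.lt b d := fun h => n3 (.inl h)
  have n3b : ¬ A.lt d b := fun h => n3 (.inr h)
  rcases e1 with l | l
  · have lcb : A.lt c b := by
      rcases e2 with h | h
      · exact absurd (A.lt_trans _ _ _ l h) n1a
      · exact h
    have lcd : A.lt c d := by
      rcases e3 with h | h
      · exact h
      · exact absurd (A.lt_trans _ _ _ h lcb) n3b
    exact embedN A a b c d hab hac had hbc hbd hcd l lcb lcd n1a n1b n2a n2b n3a n3b
  · have lbc : A.lt b c := by
      rcases e2 with h | h
      · exact h
      · exact absurd (A.lt_trans _ _ _ h l) n1b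
    have ldc : A.lt d c := by
      rcases e3 with h | h
      · exact absurd (A.lt_trans _ _ _ lbc h) n3a
      · exact h
    exact embedN A d c b a hcd.symm hbd.symm had.symm hbc.symm hac.symm hab.symm
      ldc lbc l n3b n3a n2b n2a n1b n1a

def restr (A : LPoset σ) (S : Set A.α) : LPoset σ where
  α := S
  fin := by have := A.fin; exact Subtype.finite
  lt := fun x y => A.lt x.val y.val
  lt_irrefl := fun x => A.lt_irrefl x.val
  lt_trans := fun x y z h1 h2 => A.lt_trans _ _ _ h1 h2
  label := fun x => A.label x.val

lemma nfree_sub {B A : LPoset σ} (h : B.Subpomset A) (hA : NFree A) : NFree B := by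
  rintro ⟨ℓ, f, hf, hlt, hlab⟩
  obtain ⟨g, hg, hglt, hglab⟩ := h
  exact hA ⟨ℓ, g ∘ f, hg.comp hf, fun x y => (hlt x y).trans (hglt _ _),
    fun x => (hglab _).trans (hlab x)⟩

lemma nfree_restr (A : LPoset σ) (S : Set A.α) (hA : NFree A) : NFree (restr A S) :=
  nfree_sub ⟨Subtype.val, Subtype.val_injective, fun _ _ => Iff.rfl, fun _ => rfl⟩ hA

lemma card_restr_lt (A : LPoset σ) {S : Set A.α} {y : A.α} (hy : y ∉ S) :
    Nat.card (restr A S).α < Nat.card A.α := by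
  have := A.fin
  calc Nat.card (restr A S).α = S.ncard := Nat.card_coe_set_eq S
    _ < (Set.univ : Set A.α).ncard := Set.ncard_lt_ncard
        (Set.ssubset_univ_iff.mpr (fun h => hy (h ▸ Set.mem_univ y))) Set.finite_univ
    _ = Nat.card A.α := Set.ncard_univ _

open Classical in
lemma iso_seq (A : LPoset σ) (S : Set A.α)
    (hser : ∀ x ∈ S, ∀ y ∉ S, A.lt x y) :
    LPoset.Iso ((restr A S).seq (restr A {z | z ∉ S})) A := by
  refine ⟨Equiv.sumCompl (fun z => z ∈ S), ?_, ?_⟩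
  · rintro (x | x) (y | y) <;>
      simp only [LPoset.seq, restr, Equiv.sumCompl_apply_inl, Equiv.sumCompl_apply_inr]
    · exact Iff.rfl
    · exact iff_of_true trivial (hser x.val x.2 y.val y.2)
    · exact iff_of_false (fun h => h) (fun h =>
        A.lt_irrefl _ (A.lt_trans _ _ _ h (hser y.val y.2 x.val x.2)))
    · exact Iff.rfl
  · rintro (x | x) <;> rfl

open Classical in
lemma iso_par (A : LPoset σ) (S : Set A.α)
    (hpar : ∀ x ∈ S, ∀ y ∉ S, ¬ A.lt x y ∧ ¬ A.lt y x) :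
    LPoset.Iso ((restr A S).par (restr A {z | z ∉ S})) A := by
  refine ⟨Equiv.sumCompl (fun z => z ∈ S), ?_, ?_⟩
  · rintro (x | x) (y | y) <;>
      simp only [LPoset.par, restr, Equiv.sumCompl_apply_inl, Equiv.sumCompl_apply_inr]
    · exact Iff.rfl
    · exact iff_of_false (fun h => h) (hpar x.val x.2 y.val y.2).1
    · exact iff_of_false (fun h => h) (hpar y.val y.2 x.val x.2).2
    · exact Iff.rfl
  · rintro (x | x) <;> rfl

lemma exists_max (A : LPoset σ) (h : Nonempty A.α) : ∃ m, ∀ z, ¬ A.lt m z := by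
  have := A.fin
  haveI : IsTrans A.α (fun a b => A.lt b a) := ⟨fun a b c h1 h2 => A.lt_trans _ _ _ h2 h1⟩
  haveI : IsIrrefl A.α (fun a b => A.lt b a) := ⟨fun a => A.lt_irrefl a⟩
  have hwf : WellFounded (fun a b : A.α => A.lt b a) :=
    Finite.wellFounded_of_trans_of_irrefl _
  obtain ⟨m, _, hm⟩ := hwf.has_min Set.univ Set.univ_nonempty
  exact ⟨m, fun z hz => hm z (Set.mem_univ z) hz⟩

lemma main_aux : ∀ (n : ℕ) (A : LPoset σ), Nat.card A.α ≤ n → NFree A → IsSP A := by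
  intro n
  induction n with
  | zero =>
    intro A hle _
    have := A.fin
    rcases Nat.card_eq_zero.mp (Nat.le_zero.mp hle) with h | h
    · exact IsSP.empty A h
    · exact absurd h (not_infinite_iff_finite.mpr A.fin)
  | succ n ih =>
    intro A hle hnf
    have hfin := A.fin
    rcases Nat.lt_or_ge (Nat.card A.α) 2 with hsm | hbig
    · rcases Nat.lt_or_ge (Nat.card A.α) 1 with h0 | h1
      · rcases Nat.card_eq_zero.mp (Nat.lt_one_iff.mp h0) with h | h
        · exact IsSP.empty A h
        · exact absurd h (not_infinite_iff_finite.mpr A.fin)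
      · have h1' : Nat.card A.α = 1 := by omega
        obtain ⟨hss, hnn⟩ := Nat.card_eq_one_iff_unique.mp h1'
        exact IsSP.single A hnn hss
    · have hnoP4 : ¬ HasP4 (comp A) := fun h => hnf (p4_to_N A h)
      have hnonempty : Nonempty A.α := by
        by_contra h
        rw [not_nonempty_iff] at h
        have : Nat.card A.α = 0 := Nat.card_eq_zero.mpr (Or.inl h)
        omega
      by_cases hc : Conn (comp A)
      · -- series split
        have hcoc : ¬ Conn (co (comp A)) := fun h => hnoP4
          (seinsche (Nat.card A.α) A.α hfin (comp A) (comp_symm A) (comp_irrefl A)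
            le_rfl hbig hc h)
        unfold Conn at hcoc
        push_neg at hcoc
        obtain ⟨x, y, hxy⟩ := hcoc
        obtain ⟨m, hm⟩ := exists_max A hnonempty
        have hsymco : ∀ p q : A.α, co (comp A) p q → co (comp A) q p :=
          fun p q h => ⟨h.1.symm, fun e => h.2 (Or.symm e)⟩
        set R : Set A.α := {z | Relation.ReflTransGen (co (comp A)) m z} with hRdef
        have hmR : m ∈ R := Relation.ReflTransGen.refl
        have hcompPR : ∀ p, p ∉ R → ∀ r ∈ R, comp A p r := by
          intro p hp r hr
          by_contra hnc
          by_cases hpr : p = r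
          · subst hpr; exact hp hr
          · exact hp (Relation.ReflTransGen.tail hr
              ⟨fun h => hpr h.symm, fun h => hnc (Or.symm h)⟩)
        have hser : ∀ p, p ∉ R → ∀ r ∈ R, A.lt p r := by
          intro p hp
          have hlpm : A.lt p m := by
            rcases hcompPR p hp m hmR with h | h
            · exact h
            · exact absurd h (hm p)
          intro r hr
          induction hr with
          | refl => exact hlpm
          | @tail z r h e ihh =>
            rcases hcompPR p hp r (Relation.ReflTransGen.tail h e) with h' | h'
            · exact h'
            · exact absurd (Or.inr (A.lt_trans _ _ _ h' ihh)) e.2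
        have hLne : ∃ p, p ∉ R := by
          by_contra h
          push_neg at h
          exact hxy ((rtg_symm hsymco (h x)).trans (h y))
        obtain ⟨p0, hp0⟩ := hLne
        set L : Set A.α := {z | z ∉ R} with hLdef
        have hml : m ∉ L := fun h => h hmR
        refine IsSP.iso (IsSP.seq (ih (restr A L) ?_ (nfree_restr A L hnf))
          (ih (restr A {z | z ∉ L}) ?_ (nfree_restr A _ hnf))) (iso_seq A L ?_)
        · have := card_restr_lt A (S := L) hml; omega
        · have : p0 ∉ {z | z ∉ L} := fun h => h hp0
          have := card_restr_lt A (S := {z | z ∉ L}) this; omega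
        · intro p hp q hq
          exact hser p hp q (not_not.mp hq)
      · -- parallel split
        unfold Conn at hc
        push_neg at hc
        obtain ⟨x, y, hxy⟩ := hc
        set S : Set A.α := {z | Relation.ReflTransGen (comp A) x z} with hSdef
        have hxS : x ∈ S := Relation.ReflTransGen.refl
        have hyS : y ∉ S := hxy
        have hpar : ∀ p ∈ S, ∀ q ∉ S, ¬ A.lt p q ∧ ¬ A.lt q p := by
          intro p hp q hq
          constructor
          · exact fun h => hq (Relation.ReflTransGen.tail hp (Or.inl h))
          · exact fun h => hq (Relation.ReflTransGen.tail hp (Or.inr h))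
        refine IsSP.iso (IsSP.par (ih (restr A S) ?_ (nfree_restr A S hnf))
          (ih (restr A {z | z ∉ S}) ?_ (nfree_restr A _ hnf))) (iso_par A S hpar)
        · have := card_restr_lt A (S := S) hyS; omega
        · have : x ∉ {z | z ∉ S} := fun h => h hxS
          have := card_restr_lt A (S := {z | z ∉ S}) this; omega

end SPAux
/-- Every N-free pomset (over a nonempty alphabet) is series-parallel. -/
theorem nfree_is_sp {σ : Type} [Nonempty σ] (A : LPoset σ) (h : NFree A) : IsSP A :=
  SPAux.main_aux (Nat.card A.α) A le_rfl h
end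

section
/- Any function i : Σ → M into a bimonoid (M, ⊙, ⊕, 1) extends uniquely to a bimonoid homomorphism eval : SP → M with eval(a) = i(a) for all a ∈ Σ and eval(ε) = 1. -/
/-- Syntactic terms for series-parallel pomsets over alphabet `σ`. -/
inductive SPTerm (σ : Type) : Type
  | eps : SPTerm σ
  | letter (a : σ) : SPTerm σ
  | seq (t u : SPTerm σ) : SPTerm σ
  | par (t u : SPTerm σ) : SPTerm σ

/-- Semantic equality of terms: the congruence generated by associativity of
both compositions, commutativity of `par`, and neutrality of `eps`.
By freeness of SP in the variety of bimonoids, two terms denote the same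
series-parallel pomset iff they are related by this relation. -/
inductive SPEquiv {σ : Type} : SPTerm σ → SPTerm σ → Prop
  | refl (t) : SPEquiv t t
  | symm {t u} : SPEquiv t u → SPEquiv u t
  | trans {t u v} : SPEquiv t u → SPEquiv u v → SPEquiv t v
  | seq_congr {t t' u u'} : SPEquiv t t' → SPEquiv u u' → SPEquiv (.seq t u) (.seq t' u')
  | par_congr {t t' u u'} : SPEquiv t t' → SPEquiv u u' → SPEquiv (.par t u) (.par t' u')
  | seq_assoc (t u v) : SPEquiv (.seq (.seq t u) v) (.seq t (.seq u v))
  | par_assoc (t u v) : SPEquiv (.par (.par t u) v) (.par t (.par u v))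
  | par_comm (t u) : SPEquiv (.par t u) (.par u t)
  | seq_eps_left (t) : SPEquiv (.seq .eps t) t
  | seq_eps_right (t) : SPEquiv (.seq t .eps) t
  | par_eps (t) : SPEquiv (.par t .eps) t

def SPSetoid (σ : Type) : Setoid (SPTerm σ) :=
  ⟨SPEquiv, ⟨SPEquiv.refl, SPEquiv.symm, SPEquiv.trans⟩⟩

/-- Series-parallel pomsets over `σ`. -/
def SP (σ : Type) : Type := Quotient (SPSetoid σ)

def SP.mk {σ : Type} (t : SPTerm σ) : SP σ := Quotient.mk (SPSetoid σ) t

/-- The empty pomset ε. -/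
def SP.eps {σ : Type} : SP σ := SP.mk .eps

/-- The singleton pomset labelled by `a`. -/
def SP.letter {σ : Type} (a : σ) : SP σ := SP.mk (.letter a)

/-- Sequential composition of series-parallel pomsets. -/
def SP.seq {σ : Type} : SP σ → SP σ → SP σ :=
  Quotient.map₂ SPTerm.seq (fun _ _ h _ _ h' => SPEquiv.seq_congr h h')

/-- Parallel composition of series-parallel pomsets. -/
def SP.par {σ : Type} : SP σ → SP σ → SP σ :=
  Quotient.map₂ SPTerm.par (fun _ _ h _ _ h' => SPEquiv.par_congr h h')

/-- A bimonoid structure on `M`: two associative operations, `par`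
additionally commutative, sharing the neutral element `one`. -/
structure BimonoidStr (M : Type) where
  seq : M → M → M
  par : M → M → M
  one : M
  seq_assoc : ∀ a b c, seq (seq a b) c = seq a (seq b c)
  par_assoc : ∀ a b c, par (par a b) c = par a (par b c)
  par_comm : ∀ a b, par a b = par b a
  seq_one : ∀ a, seq a one = a
  one_seq : ∀ a, seq one a = a
  par_one : ∀ a, par a one = a

/-- Evaluation of a term in a bimonoid, extending `i : σ → M`. -/
def termEval {σ M : Type} (str : BimonoidStr M) (i : σ → M) : SPTerm σ → M
  | .eps => str.one
  | .letter a => i a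
  | .seq t u => str.seq (termEval str i t) (termEval str i u)
  | .par t u => str.par (termEval str i t) (termEval str i u)

theorem termEval_congr {σ M : Type} (str : BimonoidStr M) (i : σ → M)
    {t u : SPTerm σ} (h : SPEquiv t u) : termEval str i t = termEval str i u := by
  induction h with
  | refl => rfl
  | symm _ ih => exact ih.symm
  | trans _ _ ih1 ih2 => exact ih1.trans ih2
  | seq_congr _ _ ih1 ih2 => simp only [termEval, ih1, ih2]
  | par_congr _ _ ih1 ih2 => simp only [termEval, ih1, ih2]
  | seq_assoc t u v => simp only [termEval]; exact str.seq_assoc _ _ _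
  | par_assoc t u v => simp only [termEval]; exact str.par_assoc _ _ _
  | par_comm t u => simp only [termEval]; exact str.par_comm _ _
  | seq_eps_left t => simp only [termEval]; exact str.one_seq _
  | seq_eps_right t => simp only [termEval]; exact str.seq_one _
  | par_eps t => simp only [termEval]; exact str.par_one _

/-- A pomset recognizer with state set `M`: a finite bimonoid together with
an interpretation of letters and a set of accepting states. -/
structure Recognizer (σ M : Type) where
  fin : Finite M
  str : BimonoidStr M
  i : σ → M
  F : Set M

/-- The unique homomorphic extension of `R.i` to series-parallel pomsets. -/
def Recognizer.eval {σ M : Type} (R : Recognizer σ M) : SP σ → M :=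
  Quotient.lift (termEval R.str R.i) (fun _ _ h => termEval_congr R.str R.i h)

/-- `R` accepts the pomset `w`. -/
def Recognizer.accepts {σ M : Type} (R : Recognizer σ M) (w : SP σ) : Prop :=
  R.eval w ∈ R.F

/-- The language of a recognizer. -/
def Recognizer.lang {σ M : Type} (R : Recognizer σ M) : Set (SP σ) :=
  {w | R.accepts w}

/-- 1-contexts: series-parallel pomsets with exactly one placeholder □. -/
inductive Ctx (σ : Type) : Type
  | hole : Ctx σ
  | seqL (c : Ctx σ) (w : SP σ) : Ctx σ
  | seqR (w : SP σ) (c : Ctx σ) : Ctx σ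
  | parL (c : Ctx σ) (w : SP σ) : Ctx σ
  | parR (w : SP σ) (c : Ctx σ) : Ctx σ

/-- Substitution of a pomset for the placeholder of a context: `c[z]`. -/
def Ctx.app {σ : Type} : Ctx σ → SP σ → SP σ
  | .hole, z => z
  | .seqL c w, z => SP.seq (c.app z) w
  | .seqR w c, z => SP.seq w (c.app z)
  | .parL c w, z => SP.par (c.app z) w
  | .parR w c, z => SP.par w (c.app z)

/-- any map `i : σ → M` into a bimonoid extends uniquely to a
bimonoid homomorphism `eval : SP σ → M` with `eval a = i a` and `eval ε = 1`. -/
theorem sp_freely_generated {σ M : Type} (str : BimonoidStr M) (i : σ → M) :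
    ∃! eval : SP σ → M,
      (∀ x y, eval (SP.seq x y) = str.seq (eval x) (eval y)) ∧
      (∀ x y, eval (SP.par x y) = str.par (eval x) (eval y)) ∧
      eval SP.eps = str.one ∧
      (∀ a, eval (SP.letter a) = i a) := by
  refine ⟨Quotient.lift (termEval str i) (fun _ _ h => termEval_congr str i h),
    ⟨?_, ?_, rfl, fun a => rfl⟩, ?_⟩
  · intro x y
    refine Quotient.inductionOn₂ x y (fun t u => rfl)
  · intro x y
    refine Quotient.inductionOn₂ x y (fun t u => rfl)
  · intro g ⟨hseq, hpar, heps, hlet⟩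
    funext w
    refine Quotient.inductionOn w (fun t => ?_)
    induction t with
    | eps => exact heps
    | letter a => exact hlet a
    | seq t u iht ihu =>
        have := hseq (SP.mk t) (SP.mk u)
        simp only [SP.seq, SP.mk] at this ⊢
        change g ⟦SPTerm.seq t u⟧ = _ at this
        rw [this, iht, ihu]; rfl
    | par t u iht ihu =>
        have := hpar (SP.mk t) (SP.mk u)
        simp only [SP.par, SP.mk] at this ⊢
        change g ⟦SPTerm.par t u⟧ = _ at this
        rw [this, iht, ihu]; rfl
end

section
/- If a pomset language L is recognizable by a pomset recognizer, then the syntactic equivalence ∼_L (defined by u ∼_L v iff for all 1-contexts c, c[u] ∈ L ⟺ c[v] ∈ L) is a congruence with respect to sequential and parallel composition and has finitely many equivalence classes. -/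
/-- Syntactic equivalence of a pomset language: `u ∼_L v` iff no 1-context
separates `u` and `v` with respect to membership in `L`. -/
def SynEq {σ : Type} (L : Set (SP σ)) (u v : SP σ) : Prop :=
  ∀ c : Ctx σ, c.app u ∈ L ↔ c.app v ∈ L

def synSetoid {σ : Type} (L : Set (SP σ)) : Setoid (SP σ) :=
  ⟨SynEq L, ⟨fun _ _ => Iff.rfl, fun h c => (h c).symm, fun h1 h2 c => (h1 c).trans (h2 c)⟩⟩

/-! Syntactic equivalence is preserved by plugging into a context, since contexts compose;
the congruence property follows using the contexts `□ · v` and `u' · □` (and their parallel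
analogues). Since `R.eval` is a homomorphism,
pomsets with the same value in `R` keep equal values under every context, so they are
syntactically equivalent; hence `∼_L` is coarser than the kernel of `R.eval`, which has at most
`|M|` classes. -/

theorem Setoid.finite_quotient_of_ker_le {α β : Type*} [Finite β] {f : α → β} {s : Setoid α}
    (h : Setoid.ker f ≤ s) : Finite (Quotient s) :=
  have : Finite (Quotient (Setoid.ker f)) := .of_injective _ (Setoid.kerLift_injective f)
  .of_surjective _ (Quotient.map_surjective (f := id) h Function.surjective_id)

namespace Ctx

variable {σ : Type}

def comp : Ctx σ → Ctx σ → Ctx σ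
  | .hole, d => d
  | .seqL c w, d => .seqL (c.comp d) w
  | .seqR w c, d => .seqR w (c.comp d)
  | .parL c w, d => .parL (c.comp d) w
  | .parR w c, d => .parR w (c.comp d)

theorem comp_app (c d : Ctx σ) (z : SP σ) : (c.comp d).app z = c.app (d.app z) := by
  induction c with
  | hole => rfl
  | seqL c w ih | seqR w c ih | parL c w ih | parR w c ih => simp only [comp, app, ih]

end Ctx

namespace SynEq

variable {σ : Type} {L : Set (SP σ)} {u u' v v' : SP σ}

theorem app (h : SynEq L u v) (c : Ctx σ) : SynEq L (c.app u) (c.app v) := fun d => by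
  simpa only [Ctx.comp_app] using h (d.comp c)

theorem seq (hu : SynEq L u u') (hv : SynEq L v v') : SynEq L (SP.seq u v) (SP.seq u' v') :=
  fun c => (hu.app (.seqL .hole v) c).trans (hv.app (.seqR u' .hole) c)

theorem par (hu : SynEq L u u') (hv : SynEq L v v') : SynEq L (SP.par u v) (SP.par u' v') :=
  fun c => (hu.app (.parL .hole v) c).trans (hv.app (.parR u' .hole) c)

end SynEq

namespace Recognizer

variable {σ M : Type} (R : Recognizer σ M)

theorem eval_seq (u v : SP σ) : R.eval (SP.seq u v) = R.str.seq (R.eval u) (R.eval v) := by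
  induction u using Quotient.ind; induction v using Quotient.ind; rfl

theorem eval_par (u v : SP σ) : R.eval (SP.par u v) = R.str.par (R.eval u) (R.eval v) := by
  induction u using Quotient.ind; induction v using Quotient.ind; rfl

theorem eval_app_eq_of_eval_eq {u v : SP σ} (h : R.eval u = R.eval v) (c : Ctx σ) :
    R.eval (c.app u) = R.eval (c.app v) := by
  induction c with
  | hole => exact h
  | seqL c w ih | seqR w c ih => simp only [Ctx.app, eval_seq, ih]
  | parL c w ih | parR w c ih => simp only [Ctx.app, eval_par, ih]

theorem ker_eval_le_synSetoid {L : Set (SP σ)} (hR : ∀ w, w ∈ L ↔ R.accepts w) :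
    Setoid.ker R.eval ≤ synSetoid L := fun _ _ h c => by
  rw [hR, hR, accepts, accepts, R.eval_app_eq_of_eval_eq h c]

end Recognizer

/-- if `L` is recognizable by a pomset recognizer then `∼_L` is a
congruence w.r.t. sequential and parallel composition with finitely many classes. -/
theorem recognizable_syn_congruence_finite {σ M : Type} (L : Set (SP σ))
    (R : Recognizer σ M) (hR : ∀ w, w ∈ L ↔ R.accepts w) :
    (∀ u u' v v', SynEq L u u' → SynEq L v v' →
      SynEq L (SP.seq u v) (SP.seq u' v') ∧ SynEq L (SP.par u v) (SP.par u' v')) ∧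
    Finite (Quotient (synSetoid L)) := by
  have := R.fin
  exact ⟨fun _ _ _ _ hu hv => ⟨hu.seq hv, hu.par hv⟩,
    Setoid.finite_quotient_of_ker_le (R.ker_eval_le_synSetoid hR)⟩
end

section
/- If the syntactic equivalence ∼_L of a pomset language L ⊆ SP is a congruence of finite index, then L is recognizable by a pomset recognizer. -/
/-!
A congruence of `SP σ` turns its set of classes into a bimonoid for which the quotient map is
a homomorphism, so the recognizer on those classes evaluates every pomset to its own class.
Since `∼_L` saturates `L` (take the empty context), accepting the classes of the members of
`L` recognizes exactly `L`; finite index makes this recognizer finite.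
-/

namespace SP

variable {σ : Type}

theorem seq_assoc (a b c : SP σ) : SP.seq (SP.seq a b) c = SP.seq a (SP.seq b c) :=
  Quotient.inductionOn₃ a b c fun t u v => Quotient.sound (SPEquiv.seq_assoc t u v)

theorem par_assoc (a b c : SP σ) : SP.par (SP.par a b) c = SP.par a (SP.par b c) :=
  Quotient.inductionOn₃ a b c fun t u v => Quotient.sound (SPEquiv.par_assoc t u v)

theorem par_comm (a b : SP σ) : SP.par a b = SP.par b a :=
  Quotient.inductionOn₂ a b fun t u => Quotient.sound (SPEquiv.par_comm t u)

theorem seq_eps (a : SP σ) : SP.seq a SP.eps = a :=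
  Quotient.inductionOn a fun t => Quotient.sound (SPEquiv.seq_eps_right t)

theorem eps_seq (a : SP σ) : SP.seq SP.eps a = a :=
  Quotient.inductionOn a fun t => Quotient.sound (SPEquiv.seq_eps_left t)

theorem par_eps (a : SP σ) : SP.par a SP.eps = a :=
  Quotient.inductionOn a fun t => Quotient.sound (SPEquiv.par_eps t)

def bimonoidStr (σ : Type) : BimonoidStr (SP σ) where
  seq := SP.seq
  par := SP.par
  one := SP.eps
  seq_assoc := seq_assoc
  par_assoc := par_assoc
  par_comm := par_comm
  seq_one := seq_eps
  one_seq := eps_seq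
  par_one := par_eps

end SP

namespace BimonoidStr

variable {M : Type}

def quotient (str : BimonoidStr M) (r : Setoid M)
    (hseq : ∀ a a' b b', r a a' → r b b' → r (str.seq a b) (str.seq a' b'))
    (hpar : ∀ a a' b b', r a a' → r b b' → r (str.par a b) (str.par a' b')) :
    BimonoidStr (Quotient r) where
  seq := Quotient.map₂ str.seq fun _ _ ha _ _ hb => hseq _ _ _ _ ha hb
  par := Quotient.map₂ str.par fun _ _ ha _ _ hb => hpar _ _ _ _ ha hb
  one := Quotient.mk r str.one
  seq_assoc a b c :=
    Quotient.inductionOn₃ a b c fun x y z => congrArg (Quotient.mk r) (str.seq_assoc x y z)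
  par_assoc a b c :=
    Quotient.inductionOn₃ a b c fun x y z => congrArg (Quotient.mk r) (str.par_assoc x y z)
  par_comm a b :=
    Quotient.inductionOn₂ a b fun x y => congrArg (Quotient.mk r) (str.par_comm x y)
  seq_one a := Quotient.inductionOn a fun x => congrArg (Quotient.mk r) (str.seq_one x)
  one_seq a := Quotient.inductionOn a fun x => congrArg (Quotient.mk r) (str.one_seq x)
  par_one a := Quotient.inductionOn a fun x => congrArg (Quotient.mk r) (str.par_one x)

end BimonoidStr

section Eval

variable {σ M : Type}

theorem termEval_eq_of_hom (str : BimonoidStr M) (i : σ → M) (f : SP σ → M)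
    (hi : ∀ a, i a = f (SP.letter a)) (f_eps : f SP.eps = str.one)
    (f_seq : ∀ u v, f (SP.seq u v) = str.seq (f u) (f v))
    (f_par : ∀ u v, f (SP.par u v) = str.par (f u) (f v)) (t : SPTerm σ) :
    termEval str i t = f (SP.mk t) := by
  induction t with
  | eps => exact f_eps.symm
  | letter a => exact hi a
  | seq t u iht ihu => rw [termEval, iht, ihu]; exact (f_seq _ _).symm
  | par t u iht ihu => rw [termEval, iht, ihu]; exact (f_par _ _).symm

theorem Recognizer.eval_eq_of_hom (R : Recognizer σ M) (f : SP σ → M)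
    (hi : ∀ a, R.i a = f (SP.letter a)) (f_eps : f SP.eps = R.str.one)
    (f_seq : ∀ u v, f (SP.seq u v) = R.str.seq (f u) (f v))
    (f_par : ∀ u v, f (SP.par u v) = R.str.par (f u) (f v)) : R.eval = f :=
  funext fun w => Quotient.inductionOn w (termEval_eq_of_hom R.str R.i f hi f_eps f_seq f_par)

end Eval

namespace Recognizer

variable {σ : Type}

/-- For `r = ∼_L` this is the syntactic recognizer. -/
def ofCongruence (r : Setoid (SP σ))
    (hseq : ∀ u u' v v', r u u' → r v v' → r (SP.seq u v) (SP.seq u' v'))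
    (hpar : ∀ u u' v v', r u u' → r v v' → r (SP.par u v) (SP.par u' v'))
    (hfin : Finite (Quotient r)) (L : Set (SP σ)) : Recognizer σ (Quotient r) where
  fin := hfin
  str := (SP.bimonoidStr σ).quotient r hseq hpar
  i a := Quotient.mk r (SP.letter a)
  F := Quotient.mk r '' L

variable (r : Setoid (SP σ))
    (hseq : ∀ u u' v v', r u u' → r v v' → r (SP.seq u v) (SP.seq u' v'))
    (hpar : ∀ u u' v v', r u u' → r v v' → r (SP.par u v) (SP.par u' v'))
    (hfin : Finite (Quotient r)) (L : Set (SP σ))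

theorem ofCongruence_eval : (ofCongruence r hseq hpar hfin L).eval = Quotient.mk r :=
  eval_eq_of_hom _ _ (fun _ => rfl) rfl (fun _ _ => rfl) (fun _ _ => rfl)

theorem accepts_ofCongruence_iff (hL : ∀ u v, r u v → (u ∈ L ↔ v ∈ L)) (w : SP σ) :
    (ofCongruence r hseq hpar hfin L).accepts w ↔ w ∈ L := by
  show (ofCongruence r hseq hpar hfin L).eval w ∈ Quotient.mk r '' L ↔ w ∈ L
  rw [ofCongruence_eval]
  constructor
  · rintro ⟨v, hv, hvw⟩
    exact (hL v w (Quotient.exact hvw)).mp hv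
  · exact fun hw => ⟨w, hw, rfl⟩

end Recognizer

theorem SynEq.mem_iff {σ : Type} {L : Set (SP σ)} {u v : SP σ} (h : SynEq L u v) :
    u ∈ L ↔ v ∈ L :=
  h Ctx.hole

/-- if `∼_L` is a congruence of finite index then `L` is
recognizable by a pomset recognizer. -/
theorem syn_congruence_finite_recognizable {σ : Type} (L : Set (SP σ))
    (hcong : ∀ u u' v v', SynEq L u u' → SynEq L v v' →
      SynEq L (SP.seq u v) (SP.seq u' v') ∧ SynEq L (SP.par u v) (SP.par u' v'))
    (hfin : Finite (Quotient (synSetoid L))) :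
    ∃ (M : Type) (R : Recognizer σ M), ∀ w, w ∈ L ↔ R.accepts w := by
  let R := Recognizer.ofCongruence (synSetoid L)
    (fun u u' v v' hu hv => (hcong u u' v v' hu hv).1)
    (fun u u' v v' hu hv => (hcong u u' v v' hu hv).2) hfin L
  exact ⟨_, R, fun w =>
    (Recognizer.accepts_ofCongruence_iff _ _ _ _ _ (fun _ _ h => SynEq.mem_iff h) w).symm⟩
end

section
/- Let M be a minimal pomset recognizer, q a state of M, and w an access sequence of q. Then there exists an access sequence w' of q admitting an evaluation tree with no repetition of states along any root-to-leaf branch. -/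
/-- `c` distinguishes `w1` and `w2` in `R`: exactly one of `c[w1]`, `c[w2]` is accepted. -/
def Distinguishes {σ M : Type} (R : Recognizer σ M) (c : Ctx σ) (w1 w2 : SP σ) : Prop :=
  ¬ (R.accepts (c.app w1) ↔ R.accepts (c.app w2))

/-- Every state admits an access sequence. -/
def ReachablePR {σ M : Type} (R : Recognizer σ M) : Prop :=
  ∀ m : M, ∃ w : SP σ, R.eval w = m

/-- A minimal recognizer: reachable, and any two distinct states (given by
access sequences) are distinguished by some 1-context. -/
def MinimalPR {σ M : Type} (R : Recognizer σ M) : Prop :=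
  ReachablePR R ∧ ∀ w1 w2 : SP σ, R.eval w1 ≠ R.eval w2 → ∃ c : Ctx σ, Distinguishes R c w1 w2

/-- A characterisation set: contains □ and distinguishes every distinguishable
pair of states (given by access sequences). -/
def CharSet {σ M : Type} (R : Recognizer σ M) (W : Set (Ctx σ)) : Prop :=
  Ctx.hole ∈ W ∧
  ∀ w1 w2 : SP σ, (∃ c : Ctx σ, Distinguishes R c w1 w2) → ∃ c ∈ W, Distinguishes R c w1 w2

/-- The lists of states along the root-to-leaf branches of the evaluation tree
of the syntactic term `t` in the recognizer `R`. -/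
def Recognizer.branches {σ M : Type} (R : Recognizer σ M) : SPTerm σ → List (List M)
  | .eps => [[R.str.one]]
  | .letter a => [[R.i a]]
  | .seq t u => (R.branches t ++ R.branches u).map
      (fun b => termEval R.str R.i (.seq t u) :: b)
  | .par t u => (R.branches t ++ R.branches u).map
      (fun b => termEval R.str R.i (.par t u) :: b)

/-!
Take a term of least size among those evaluating to `q`. If a state repeated along a branch of
its evaluation tree, the subterm at the lower occurrence could replace the subterm at the upper
one without changing the value of the whole term, producing a strictly smaller term for `q`.
-/

def SPTerm.size {σ : Type} : SPTerm σ → ℕ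
  | .eps => 1
  | .letter _ => 1
  | .seq t u => t.size + u.size + 1
  | .par t u => t.size + u.size + 1

namespace Recognizer

variable {σ M : Type} (R : Recognizer σ M)

def IsMinimalTerm (t : SPTerm σ) : Prop :=
  ∀ s : SPTerm σ, termEval R.str R.i s = termEval R.str R.i t → t.size ≤ s.size

variable {R}

theorem exists_isMinimalTerm (t : SPTerm σ) :
    ∃ s, termEval R.str R.i s = termEval R.str R.i t ∧ R.IsMinimalTerm s := by
  classical
  have h : ∃ n, ∃ s, termEval R.str R.i s = termEval R.str R.i t ∧ s.size = n := ⟨_, t, rfl, rfl⟩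
  obtain ⟨s, hs, hsize⟩ := Nat.find_spec h
  exact ⟨s, hs, fun s' hs' => hsize ▸ Nat.find_min' h ⟨s', hs'.trans hs, rfl⟩⟩

theorem IsMinimalTerm.seq {t u : SPTerm σ} (h : R.IsMinimalTerm (.seq t u)) :
    R.IsMinimalTerm t ∧ R.IsMinimalTerm u := by
  constructor
  · intro s hs
    have := h (.seq s u) (by simp only [termEval, hs])
    simp only [SPTerm.size] at this; omega
  · intro s hs
    have := h (.seq t s) (by simp only [termEval, hs])
    simp only [SPTerm.size] at this; omega

theorem IsMinimalTerm.par {t u : SPTerm σ} (h : R.IsMinimalTerm (.par t u)) :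
    R.IsMinimalTerm t ∧ R.IsMinimalTerm u := by
  constructor
  · intro s hs
    have := h (.par s u) (by simp only [termEval, hs])
    simp only [SPTerm.size] at this; omega
  · intro s hs
    have := h (.par t s) (by simp only [termEval, hs])
    simp only [SPTerm.size] at this; omega

theorem exists_size_le_of_mem_branches {t : SPTerm σ} {b : List M} (hb : b ∈ R.branches t)
    {x : M} (hx : x ∈ b) : ∃ s : SPTerm σ, termEval R.str R.i s = x ∧ s.size ≤ t.size := by
  induction t generalizing b with
  | eps | letter =>
    simp only [branches, List.mem_singleton] at hb
    subst hb
    rw [List.mem_singleton.mp hx]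
    exact ⟨_, rfl, le_rfl⟩
  | seq t u iht ihu | par t u iht ihu =>
    simp only [branches, List.mem_map, List.mem_append] at hb
    obtain ⟨b, hb, rfl⟩ := hb
    rcases List.mem_cons.mp hx with rfl | hx
    · exact ⟨_, rfl, le_rfl⟩
    rcases hb with hb | hb
    · obtain ⟨s, hs, hsize⟩ := iht hb hx
      exact ⟨s, hs, by simp only [SPTerm.size]; omega⟩
    · obtain ⟨s, hs, hsize⟩ := ihu hb hx
      exact ⟨s, hs, by simp only [SPTerm.size]; omega⟩

theorem nodup_cons_of_mem_branches {t c : SPTerm σ} (ht : R.IsMinimalTerm t)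
    (hc : c.size < t.size) (ih : ∀ b ∈ R.branches c, b.Nodup) {b : List M}
    (hb : b ∈ R.branches c) : (termEval R.str R.i t :: b).Nodup := by
  refine List.nodup_cons.mpr ⟨fun hmem => ?_, ih b hb⟩
  obtain ⟨s, hs, hsize⟩ := exists_size_le_of_mem_branches hb hmem
  exact absurd (ht s hs) (by omega)

theorem IsMinimalTerm.nodup_of_mem_branches {t : SPTerm σ} (ht : R.IsMinimalTerm t) :
    ∀ b ∈ R.branches t, b.Nodup := by
  induction t with
  | eps | letter => simp [branches]
  | seq t u iht ihu | par t u iht ihu =>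
    first
      | obtain ⟨htm, hum⟩ := ht.seq
      | obtain ⟨htm, hum⟩ := ht.par
    simp only [branches, List.mem_map, List.mem_append]
    rintro _ ⟨b, hb | hb, rfl⟩
    · exact nodup_cons_of_mem_branches ht (by simp only [SPTerm.size]; omega) (iht htm) hb
    · exact nodup_cons_of_mem_branches ht (by simp only [SPTerm.size]; omega) (ihu hum) hb

end Recognizer

theorem access_sequence_without_repetition_general {σ M : Type} (R : Recognizer σ M)
    (q : M) (w : SP σ) (hw : R.eval w = q) :
    ∃ t : SPTerm σ, R.eval (SP.mk t) = q ∧ ∀ b ∈ R.branches t, b.Nodup := by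
  obtain ⟨t, rfl⟩ := Quotient.exists_rep w
  obtain ⟨s, hs, hsmin⟩ := R.exists_isMinimalTerm t
  exact ⟨s, hs.trans hw, hsmin.nodup_of_mem_branches⟩

/-- every state `q` with an access sequence admits an access
sequence whose evaluation tree has no repetition of states along any branch. -/
theorem access_sequence_without_repetition {σ M : Type} (R : Recognizer σ M)
    (hmin : MinimalPR R) (q : M) (w : SP σ) (hw : R.eval w = q) :
    ∃ t : SPTerm σ, R.eval (SP.mk t) = q ∧ ∀ b ∈ R.branches t, b.Nodup :=
  access_sequence_without_repetition_general R q w hw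
end

section
/- Let H be a minimal pomset recognizer with n states, M a minimal pomset recognizer with at most n + k states over the same alphabet, P a state cover of H, and W a characterisation set of H. If H and M agree on all pomsets in W[P] = {c[p] | c ∈ W, p ∈ P}, then the set L_k(P) of all pomsets c[p1, …, pm] obtained by filling a multi-context c of depth at most k with elements of P is a state cover of M. -/
/-- A state cover: contains ε and an access sequence for every state. -/
def StateCover {σ M : Type} (R : Recognizer σ M) (P : Set (SP σ)) : Prop :=
  SP.eps ∈ P ∧ ∀ m : M, ∃ p ∈ P, R.eval p = m

/-- `Lcov P i`: all pomsets obtained by filling a multi-context of depth at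
most `i` with elements of `P`.  A depth-0 multi-context is a placeholder
(filled by an element of `P`), a letter, or ε; a filled multi-context of depth
at most `i+1` is either of depth at most `i` or a sequential or parallel
composition of two filled multi-contexts of depth at most `i`. -/
def Lcov {σ : Type} (P : Set (SP σ)) : ℕ → Set (SP σ)
  | 0 => P ∪ Set.range SP.letter ∪ {SP.eps}
  | i + 1 => Lcov P i ∪
      {w | ∃ u ∈ Lcov P i, ∃ v ∈ Lcov P i, w = SP.seq u v ∨ w = SP.par u v}

lemma eval_seq' {σ M : Type} (R : Recognizer σ M) (u v : SP σ) :
    R.eval (SP.seq u v) = R.str.seq (R.eval u) (R.eval v) :=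
  Quotient.inductionOn₂ u v (fun _ _ => rfl)

lemma eval_par' {σ M : Type} (R : Recognizer σ M) (u v : SP σ) :
    R.eval (SP.par u v) = R.str.par (R.eval u) (R.eval v) :=
  Quotient.inductionOn₂ u v (fun _ _ => rfl)

lemma eval_ctx' {σ M : Type} (R : Recognizer σ M) (c : Ctx σ) {z1 z2 : SP σ}
    (h : R.eval z1 = R.eval z2) : R.eval (c.app z1) = R.eval (c.app z2) := by
  induction c with
  | hole => exact h
  | seqL c w ih => simp only [Ctx.app, eval_seq', ih]
  | seqR w c ih => simp only [Ctx.app, eval_seq', ih]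
  | parL c w ih => simp only [Ctx.app, eval_par', ih]
  | parR w c ih => simp only [Ctx.app, eval_par', ih]

/-- if the hypothesis `H` (with `n` states) and the model `M`
(with at most `n + k` states) agree on `W[P]`, then `Lcov P k` is a state
cover of the model `M`. -/
theorem extended_state_cover {σ mH mM : Type} (H : Recognizer σ mH) (M : Recognizer σ mM)
    (n k : ℕ) (hH : MinimalPR H) (hM : MinimalPR M)
    (hn : Nat.card mH = n) (hlo : n ≤ Nat.card mM) (hhi : Nat.card mM ≤ n + k)
    (P : Set (SP σ)) (hP : StateCover H P)
    (W : Set (Ctx σ)) (hW : CharSet H W)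
    (hagree : ∀ c ∈ W, ∀ p ∈ P, (H.accepts (c.app p) ↔ M.accepts (c.app p))) :
    StateCover M (Lcov P k) := by
  classical
  have finM : Finite mM := M.fin
  obtain ⟨hεP, hcov⟩ := hP
  set S : ℕ → Set mM := fun i => M.eval '' Lcov P i with hSdef
  -- basic memberships
  have hsub01 : ∀ i, S i ⊆ S (i + 1) :=
    fun i => Set.image_mono (fun x hx => Or.inl hx)
  have hS0 : ∀ i, S 0 ⊆ S i := by
    intro i
    induction i with
    | zero => exact subset_rfl
    | succ i ih => exact ih.trans (hsub01 i)
  have honeS : ∀ i, M.str.one ∈ S i := by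
    intro i
    exact hS0 i ⟨SP.eps, Or.inr rfl, rfl⟩
  have hletS : ∀ i a, M.i a ∈ S i := by
    intro i a
    exact hS0 i ⟨SP.letter a, Or.inl (Or.inr ⟨a, rfl⟩), rfl⟩
  -- the key agreement: P-elements with equal M-value have equal H-value
  have key : ∀ p1 ∈ P, ∀ p2 ∈ P, M.eval p1 = M.eval p2 → H.eval p1 = H.eval p2 := by
    intro p1 hp1 p2 hp2 hMeq
    by_contra hne
    obtain ⟨c, hcW, hcd⟩ := hW.2 p1 p2 (hH.2 p1 p2 hne)
    apply hcd
    have hMacc : M.accepts (c.app p1) ↔ M.accepts (c.app p2) := by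
      unfold Recognizer.accepts
      rw [eval_ctx' M c hMeq]
    rw [hagree c hcW p1 hp1, hagree c hcW p2 hp2]
    exact hMacc
  -- injection from mH into S 0
  have hcard0 : n ≤ (S 0).ncard := by
    have : ∀ m : mH, ∃ x : mM, x ∈ S 0 ∧ ∃ p ∈ P, H.eval p = m ∧ M.eval p = x := by
      intro m
      obtain ⟨p, hpP, hpe⟩ := hcov m
      exact ⟨M.eval p, ⟨p, Or.inl (Or.inl hpP), rfl⟩, p, hpP, hpe, rfl⟩
    choose f hfS p hpP hpH hpM using this
    have hinj : Function.Injective (fun m : mH => (⟨f m, hfS m⟩ : S 0)) := by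
      intro m1 m2 h
      have : M.eval (p m1) = M.eval (p m2) := by
        rw [hpM, hpM]; exact congrArg Subtype.val h
      have := key _ (hpP m1) _ (hpP m2) this
      rw [hpH, hpH] at this
      exact this
    calc n = Nat.card mH := hn.symm
      _ ≤ Nat.card (S 0) := Nat.card_le_card_of_injective _ hinj
      _ = (S 0).ncard := (Nat.card_coe_set_eq _)
  -- if a level is closed, it is everything
  have closed : ∀ i, S (i + 1) ⊆ S i → S i = Set.univ := by
    intro i hsub
    have hseqS : ∀ a ∈ S i, ∀ b ∈ S i, M.str.seq a b ∈ S i := by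
      rintro a ⟨u, hu, rfl⟩ b ⟨v, hv, rfl⟩
      exact hsub ⟨SP.seq u v, Or.inr ⟨u, hu, v, hv, Or.inl rfl⟩, eval_seq' M u v⟩
    have hparS : ∀ a ∈ S i, ∀ b ∈ S i, M.str.par a b ∈ S i := by
      rintro a ⟨u, hu, rfl⟩ b ⟨v, hv, rfl⟩
      exact hsub ⟨SP.par u v, Or.inr ⟨u, hu, v, hv, Or.inr rfl⟩, eval_par' M u v⟩
    have hall : ∀ t : SPTerm σ, termEval M.str M.i t ∈ S i := by
      intro t
      induction t with
      | eps => exact honeS i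
      | letter a => exact hletS i a
      | seq t u iht ihu => exact hseqS _ iht _ ihu
      | par t u iht ihu => exact hparS _ iht _ ihu
    apply Set.eq_univ_of_forall
    intro m
    obtain ⟨w, hw⟩ := hM.1 m
    revert hw
    refine Quotient.inductionOn w ?_
    intro t hw
    rw [← hw]
    exact hall t
  -- growth: at each level, universal or cardinality grows
  have main : ∀ i, S i = Set.univ ∨ n + i ≤ (S i).ncard := by
    intro i
    induction i with
    | zero => exact Or.inr hcard0
    | succ i ih =>
      rcases ih with huniv | hcard
      · left
        exact Set.eq_univ_of_univ_subset (huniv ▸ hsub01 i)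
      · by_cases hsub : S (i + 1) ⊆ S i
        · left
          exact Set.eq_univ_of_univ_subset ((closed i hsub) ▸ hsub01 i)
        · right
          have hssub : S i ⊂ S (i + 1) := ⟨hsub01 i, hsub⟩
          have : (S i).ncard < (S (i + 1)).ncard :=
            Set.ncard_lt_ncard hssub (Set.toFinite _)
          omega
  -- conclude S k = univ
  have hSk : S k = Set.univ := by
    rcases main k with h | h
    · exact h
    · refine Set.eq_of_subset_of_ncard_le (Set.subset_univ _) ?_ (Set.toFinite _)
      rw [Set.ncard_univ]
      omega
  constructor
  · have hLmono : ∀ i, Lcov P 0 ⊆ Lcov P i := by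
      intro i
      induction i with
      | zero => exact subset_rfl
      | succ i ih => exact ih.trans (fun x hx => Or.inl hx)
    exact hLmono k (Or.inr rfl)
  · intro m
    have : m ∈ S k := hSk ▸ Set.mem_univ m
    obtain ⟨p, hp, hpe⟩ := this
    exact ⟨p, hp, hpe⟩
end

section
/- For the sequence V_{i+1} = V_i² + V_i with V_0 > 0, the sequence (log V_i)/2^i is strictly increasing and converges to a limit γ, and γ − (log V_i)/2^i = O(1/(2^i · V_i)). -/
/-- for the recurrence `V (i+1) = V i ^ 2 + V i` with `V 0 > 0`,
the sequence `log (V i) / 2 ^ i` is strictly increasing and converges to a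
limit `γ`, with `γ - log (V i) / 2 ^ i = O (1 / (2 ^ i * V i))`. -/
theorem aux_sequence_convergence (V : ℕ → ℝ) (hV0 : 0 < V 0)
    (hrec : ∀ i, V (i + 1) = V i ^ 2 + V i) :
    StrictMono (fun i : ℕ => Real.log (V i) / 2 ^ i) ∧
    ∃ γ C : ℝ,
      Filter.Tendsto (fun i : ℕ => Real.log (V i) / 2 ^ i) Filter.atTop (nhds γ) ∧
      ∀ i : ℕ, 0 ≤ γ - Real.log (V i) / 2 ^ i ∧
        γ - Real.log (V i) / 2 ^ i ≤ C / (2 ^ i * V i) := by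
  have hpos : ∀ i, 0 < V i := by
    intro i
    induction i with
    | zero => exact hV0
    | succ n ih => rw [hrec]; positivity
  set a : ℕ → ℝ := fun i => Real.log (V i) / 2 ^ i with ha
  have hVmono : Monotone V := by
    apply monotone_nat_of_le_succ
    intro n
    rw [hrec]
    nlinarith [sq_nonneg (V n)]
  have hstep : ∀ i, a (i + 1) = a i + Real.log (1 + 1 / V i) / 2 ^ (i + 1) := by
    intro i
    have hVi := hpos i
    have h1 : V (i + 1) = V i ^ 2 * (1 + 1 / V i) := by
      rw [hrec]; field_simp
    simp only [ha]
    rw [h1, Real.log_mul (by positivity) (by positivity), Real.log_pow]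
    push_cast
    field_simp
    ring
  have hlogpos : ∀ i, 0 < Real.log (1 + 1 / V i) := by
    intro i
    apply Real.log_pos
    have := hpos i
    have : 0 < 1 / V i := by positivity
    linarith
  have hsm : StrictMono a := by
    apply strictMono_nat_of_lt_succ
    intro n
    rw [hstep n]
    have := hlogpos n
    have h2 : (0:ℝ) < 2 ^ (n + 1) := by positivity
    nlinarith [div_pos this h2]
  have hle : ∀ i, a (i + 1) ≤ a i + 1 / (2 ^ (i + 1) * V i) := by
    intro i
    rw [hstep i]
    have hVi := hpos i
    have hlog : Real.log (1 + 1 / V i) ≤ 1 / V i := by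
      have := Real.log_le_sub_one_of_pos (x := 1 + 1 / V i) (by positivity)
      linarith
    have h2 : (0:ℝ) < 2 ^ (i + 1) := by positivity
    have : Real.log (1 + 1 / V i) / 2 ^ (i + 1) ≤ (1 / V i) / 2 ^ (i + 1) := by
      gcongr
    calc a i + Real.log (1 + 1 / V i) / 2 ^ (i + 1)
        ≤ a i + (1 / V i) / 2 ^ (i + 1) := by linarith
      _ = a i + 1 / (2 ^ (i + 1) * V i) := by
          rw [div_div]; ring_nf
  have hkey : ∀ i j, a (i + j) ≤ a i + (1 / V i) * (1 / 2 ^ i - 1 / 2 ^ (i + j)) := by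
    intro i j
    induction j with
    | zero => simp
    | succ k ih =>
      have h1 : a (i + k + 1) ≤ a (i + k) + 1 / (2 ^ (i + k + 1) * V (i + k)) := hle (i + k)
      have hVi := hpos i
      have hVik := hpos (i + k)
      have hVle : V i ≤ V (i + k) := hVmono (Nat.le_add_right i k)
      have h2 : 1 / (2 ^ (i + k + 1) * V (i + k)) ≤ 1 / (2 ^ (i + k + 1) * V i) := by
        apply one_div_le_one_div_of_le (by positivity)
        have h3 : (0:ℝ) < 2 ^ (i + k + 1) := by positivity
        exact mul_le_mul_of_nonneg_left hVle h3.le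
      have heq : (1 / V i) * (1 / 2 ^ i - 1 / 2 ^ (i + k)) + 1 / (2 ^ (i + k + 1) * V i)
          = (1 / V i) * (1 / 2 ^ i - 1 / 2 ^ (i + (k + 1))) := by
        have : (i + (k + 1)) = (i + k) + 1 := by ring
        rw [this]
        have h4 : (2:ℝ) ^ (i + k + 1) = 2 * 2 ^ (i + k) := by ring
        field_simp
        ring
      have : i + (k + 1) = i + k + 1 := by ring
      rw [this]
      calc a (i + k + 1) ≤ a (i + k) + 1 / (2 ^ (i + k + 1) * V (i + k)) := h1
        _ ≤ a i + (1 / V i) * (1 / 2 ^ i - 1 / 2 ^ (i + k)) + 1 / (2 ^ (i + k + 1) * V i) := by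
            linarith
        _ = a i + (1 / V i) * (1 / 2 ^ i - 1 / 2 ^ (i + (k + 1))) := by rw [add_assoc, heq]
  have hbound : ∀ i j, a j ≤ a i + 1 / (2 ^ i * V i) := by
    intro i j
    have hVi := hpos i
    rcases le_or_gt i j with h | h
    · obtain ⟨k, rfl⟩ := Nat.exists_eq_add_of_le h
      calc a (i + k) ≤ a i + (1 / V i) * (1 / 2 ^ i - 1 / 2 ^ (i + k)) := hkey i k
        _ ≤ a i + (1 / V i) * (1 / 2 ^ i) := by
            have h1 : (0:ℝ) < 1 / V i := by positivity
            have h2 : (0:ℝ) ≤ 1 / 2 ^ (i + k) := by positivity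
            nlinarith
        _ = a i + 1 / (2 ^ i * V i) := by rw [div_mul_div_comm, one_mul, mul_comm]
    · have := (hsm.le_iff_le).mpr h.le
      have hnn : (0:ℝ) ≤ 1 / (2 ^ i * V i) := by positivity
      linarith [hsm.monotone h.le]
  have hbdd : BddAbove (Set.range a) := by
    refine ⟨a 0 + 1 / (2 ^ 0 * V 0), ?_⟩
    rintro x ⟨j, rfl⟩
    exact hbound 0 j
  have htend : Filter.Tendsto a Filter.atTop (nhds (⨆ i, a i)) :=
    tendsto_atTop_ciSup hsm.monotone hbdd
  refine ⟨hsm, ⨆ i, a i, 1, htend, fun i => ?_⟩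
  constructor
  · have : a i ≤ ⨆ i, a i := le_ciSup hbdd i
    linarith
  · have : (⨆ j, a j) ≤ a i + 1 / (2 ^ i * V i) := ciSup_le (fun j => hbound i j)
    have h1 : (1:ℝ) / (2 ^ i * V i) = 1 / (2 ^ i * V i) := rfl
    linarith
end

section
/- Let H be the hypothesis recognizer built from an associative and consistent partition B of S ∪ S⁺ where S is closed under subpomsets. Then for every s ∈ S ∪ S⁺, eval_H(s) = B_s (the component of B containing s); consequently H is reachable. -/
/-- `u` is a direct factor (hence a subpomset) of `w`. -/
def IsFactor {σ : Type} (u w : SP σ) : Prop :=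
  ∃ v, w = SP.seq u v ∨ w = SP.seq v u ∨ w = SP.par u v ∨ w = SP.par v u

/-- The frontier `S⁺ = (Σ ∪ {u ∘ v | ∘ ∈ {·, ∥}, u, v ∈ S}) \ S`. -/
def SPlus {σ : Type} (S : Set (SP σ)) : Set (SP σ) :=
  (Set.range SP.letter ∪
    {w | ∃ u ∈ S, ∃ v ∈ S, w = SP.seq u v ∨ w = SP.par u v}) \ S

/-- the hypothesis recognizer `H` built from an associative,
consistent partition (given by the component map `cls`) of `S ∪ S⁺`, where `S`
is subpomset-closed, evaluates every `s ∈ S ∪ S⁺` to its component `B_s`;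
consequently `H` is reachable. -/
theorem hypothesis_eval_and_reachable {σ β : Type} [Finite β]
    (S : Set (SP σ)) (hfinS : S.Finite) (heps : SP.eps ∈ S)
    (hclosed : ∀ u w : SP σ, IsFactor u w → w ∈ S → u ∈ S)
    (cls : SP σ → β)
    (hcover : ∀ b : β, ∃ s ∈ S, cls s = b)
    (hcons : ∀ u1 ∈ S, ∀ v1 ∈ S, ∀ u2 ∈ S, ∀ v2 ∈ S,
      cls u1 = cls v1 → cls u2 = cls v2 →
      cls (SP.seq u1 u2) = cls (SP.seq v1 v2) ∧ cls (SP.par u1 u2) = cls (SP.par v1 v2))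
    (hassoc_seq : ∀ s1 ∈ S, ∀ s2 ∈ S, ∀ s3 ∈ S, ∀ sl ∈ S, ∀ sr ∈ S,
      cls sl = cls (SP.seq s1 s2) → cls sr = cls (SP.seq s2 s3) →
      cls (SP.seq sl s3) = cls (SP.seq s1 sr))
    (hassoc_par : ∀ s1 ∈ S, ∀ s2 ∈ S, ∀ s3 ∈ S, ∀ sl ∈ S, ∀ sr ∈ S,
      cls sl = cls (SP.par s1 s2) → cls sr = cls (SP.par s2 s3) →
      cls (SP.par sl s3) = cls (SP.par s1 sr))
    (H : Recognizer σ β)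
    (hseq : ∀ u ∈ S, ∀ v ∈ S, H.str.seq (cls u) (cls v) = cls (SP.seq u v))
    (hpar : ∀ u ∈ S, ∀ v ∈ S, H.str.par (cls u) (cls v) = cls (SP.par u v))
    (hone : H.str.one = cls SP.eps)
    (hi : ∀ a : σ, H.i a = cls (SP.letter a))
    :
    (∀ s ∈ S ∪ SPlus S, H.eval s = cls s) ∧ ReachablePR H := by
  have hmk_seq : ∀ t u : SPTerm σ, SP.seq (SP.mk t) (SP.mk u) = SP.mk (.seq t u) :=
    fun _ _ => rfl
  have hmk_par : ∀ t u : SPTerm σ, SP.par (SP.mk t) (SP.mk u) = SP.mk (.par t u) :=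
    fun _ _ => rfl
  -- eval in S
  have hS : ∀ t : SPTerm σ, SP.mk t ∈ S → H.eval (SP.mk t) = cls (SP.mk t) := by
    intro t
    induction t with
    | eps => intro _; exact hone
    | letter a => intro _; exact hi a
    | seq t u iht ihu =>
      intro hmem
      have ht : SP.mk t ∈ S := hclosed _ _ ⟨SP.mk u, Or.inl (hmk_seq t u).symm⟩ hmem
      have hu : SP.mk u ∈ S :=
        hclosed _ _ ⟨SP.mk t, Or.inr (Or.inl (hmk_seq t u).symm)⟩ hmem
      have : H.eval (SP.mk (.seq t u)) = H.str.seq (H.eval (SP.mk t)) (H.eval (SP.mk u)) := rfl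
      rw [this, iht ht, ihu hu, hseq _ ht _ hu, hmk_seq]
    | par t u iht ihu =>
      intro hmem
      have ht : SP.mk t ∈ S :=
        hclosed _ _ ⟨SP.mk u, Or.inr (Or.inr (Or.inl (hmk_par t u).symm))⟩ hmem
      have hu : SP.mk u ∈ S :=
        hclosed _ _ ⟨SP.mk t, Or.inr (Or.inr (Or.inr (hmk_par t u).symm))⟩ hmem
      have : H.eval (SP.mk (.par t u)) = H.str.par (H.eval (SP.mk t)) (H.eval (SP.mk u)) := rfl
      rw [this, iht ht, ihu hu, hpar _ ht _ hu, hmk_par]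
  have hS' : ∀ s ∈ S, H.eval s = cls s := by
    intro s hs
    obtain ⟨t, rfl⟩ := Quotient.exists_rep s
    exact hS t hs
  have hevalseq : ∀ u v : SP σ, H.eval (SP.seq u v) = H.str.seq (H.eval u) (H.eval v) := by
    intro u v
    obtain ⟨t, rfl⟩ := Quotient.exists_rep u
    obtain ⟨t', rfl⟩ := Quotient.exists_rep v
    rfl
  have hevalpar : ∀ u v : SP σ, H.eval (SP.par u v) = H.str.par (H.eval u) (H.eval v) := by
    intro u v
    obtain ⟨t, rfl⟩ := Quotient.exists_rep u
    obtain ⟨t', rfl⟩ := Quotient.exists_rep v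
    rfl
  have main : ∀ s ∈ S ∪ SPlus S, H.eval s = cls s := by
    intro s hs
    rcases hs with hs | ⟨hs, _⟩
    · exact hS' s hs
    · rcases hs with ⟨a, rfl⟩ | ⟨u, hu, v, hv, rfl | rfl⟩
      · exact hi a
      · rw [hevalseq, hS' u hu, hS' v hv, hseq _ hu _ hv]
      · rw [hevalpar, hS' u hu, hS' v hv, hpar _ hu _ hv]
  refine ⟨main, fun b => ?_⟩
  obtain ⟨s, hs, rfl⟩ := hcover b
  exact ⟨s, hS' s hs⟩
end
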